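/- Let N be a weakly connected, forward-backward conflict free Petri net (without self-loops) having at least one proper source place or at least one proper sink place. Then every firing sequence transforming the source marking M₀ into the sink marking M_d fires every transition of N at least once. -/
import Mathlib


/-- A Petri net: finite sets of places and transitions, with input and output places
for each transition. -/
structure PetriNet where
  P : Type
  T : Type
  [fintypeP : Fintype P]
  [fintypeT : Fintype T]
  [decEqP : DecidableEq P]
  [decEqT : DecidableEq T]
  inp : T → Finset P
  out : T → Finset P

attribute [instance] PetriNet.fintypeP PetriNet.fintypeT PetriNet.decEqP PetriNet.decEqT

namespace PetriNet

variable (N : PetriNet)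

/-- No place is both an input and an output of the same transition. -/
def NoSelfLoops : Prop := ∀ t, Disjoint (N.inp t) (N.out t)

/-- The input transitions of a place: those of which it is an output. -/
def pIn (p : N.P) : Finset N.T := Finset.univ.filter (fun t => p ∈ N.out t)

/-- The output transitions of a place: those of which it is an input. -/
def pOut (p : N.P) : Finset N.T := Finset.univ.filter (fun t => p ∈ N.inp t)

/-- Forward-backward conflict freeness: every place has at most one input and at most
one output transition. -/
def FBCF : Prop := ∀ p : N.P, (N.pIn p).card ≤ 1 ∧ (N.pOut p).card ≤ 1

/-- The arcs of the directed graph of the net, on vertices `P ⊕ T`. -/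
def arc : (N.P ⊕ N.T) → (N.P ⊕ N.T) → Prop
  | .inl p, .inr t => p ∈ N.inp t
  | .inr t, .inl p => p ∈ N.out t
  | _, _ => False

/-- The net is acyclic: its directed graph has no directed cycle. -/
def Acyclic : Prop := ∀ v, ¬ Relation.TransGen N.arc v v

/-- The underlying undirected graph of the net is connected. -/
def WeaklyConnected : Prop :=
  ∀ v w, Relation.ReflTransGen (fun a b => N.arc a b ∨ N.arc b a) v w

def IsSource (p : N.P) : Prop := N.pIn p = ∅
def IsSink (p : N.P) : Prop := N.pOut p = ∅
def IsProperSource (p : N.P) : Prop := N.IsSource p ∧ N.pOut p ≠ ∅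
def IsProperSink (p : N.P) : Prop := N.IsSink p ∧ N.pIn p ≠ ∅

/-- The source marking: one token in every source place, none elsewhere. -/
def M0 : N.P → ℕ := fun p => if N.pIn p = ∅ then 1 else 0

/-- The sink marking: one token in every sink place, none elsewhere. -/
def Md : N.P → ℕ := fun p => if N.pOut p = ∅ then 1 else 0

/-- A transition is enabled when each of its input places holds a token. -/
def Enabled (M : N.P → ℕ) (t : N.T) : Prop := ∀ p ∈ N.inp t, 1 ≤ M p

/-- The marking obtained by firing a transition. -/
def fire (M : N.P → ℕ) (t : N.T) : N.P → ℕ :=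
  fun p => if p ∈ N.inp t then M p - 1 else if p ∈ N.out t then M p + 1 else M p

/-- `FireSeq M ts M'` holds when successively firing the (enabled) transitions of the
list `ts` transforms the marking `M` into `M'`. -/
inductive FireSeq : (N.P → ℕ) → List N.T → (N.P → ℕ) → Prop
  | nil (M : N.P → ℕ) : FireSeq M [] M
  | cons {M M' : N.P → ℕ} (t : N.T) (ts : List N.T) :
      N.Enabled M t → FireSeq (N.fire M t) ts M' → FireSeq M (t :: ts) M'

/-- Reachability of a marking from another by a firing sequence. -/
def Reachable (M₀ M : N.P → ℕ) : Prop := ∃ ts, N.FireSeq M₀ ts M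


variable {N : PetriNet}

lemma mem_pIn {p : N.P} {t : N.T} : t ∈ N.pIn p ↔ p ∈ N.out t := by
  simp [pIn]

lemma mem_pOut {p : N.P} {t : N.T} : t ∈ N.pOut p ↔ p ∈ N.inp t := by
  simp [pOut]

lemma balance (hself : N.NoSelfLoops) :
    ∀ {M M' : N.P → ℕ} {ts : List N.T}, N.FireSeq M ts M' → ∀ p,
      M' p + ts.countP (fun u => decide (p ∈ N.inp u)) =
      M p + ts.countP (fun u => decide (p ∈ N.out u)) := by
  intro M M' ts h
  induction h with
  | nil M => simp
  | @cons M M' t ts hen hsq ih =>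
    intro p
    have hih := ih p
    simp only [List.countP_cons]
    by_cases h1 : p ∈ N.inp t
    · have h2 : p ∉ N.out t := Finset.disjoint_left.mp (hself t) h1
      have hM : 1 ≤ M p := hen p h1
      simp only [fire, if_pos h1] at hih
      simp only [decide_eq_true_eq, if_pos h1, if_neg h2]
      omega
    · by_cases h2 : p ∈ N.out t
      · simp only [fire, if_neg h1, if_pos h2] at hih
        simp only [decide_eq_true_eq, if_neg h1, if_pos h2]
        omega
      · simp only [fire, if_neg h1, if_neg h2] at hih
        simp only [decide_eq_true_eq, if_neg h1, if_neg h2]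
        omega

lemma countP_eq_count {α : Type} [DecidableEq α] (ts : List α) (t : α)
    (pred : α → Prop) [DecidablePred pred] (h : ∀ u, pred u ↔ u = t) :
    ts.countP (fun u => decide (pred u)) = ts.count t := by
  induction ts with
  | nil => simp
  | cons a l ih =>
    simp only [List.countP_cons, List.count_cons, ih]
    by_cases ha : a = t
    · simp [ha, (h t).mpr rfl]
    · simp [ha, h a]

lemma pIn_eq_singleton (hfbcf : N.FBCF) {p : N.P} {t : N.T} (h : t ∈ N.pIn p) :
    N.pIn p = {t} :=
  Finset.eq_singleton_iff_unique_mem.mpr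
    ⟨h, fun b hb => Finset.card_le_one.mp (hfbcf p).1 b hb t h⟩

lemma pOut_eq_singleton (hfbcf : N.FBCF) {p : N.P} {t : N.T} (h : t ∈ N.pOut p) :
    N.pOut p = {t} :=
  Finset.eq_singleton_iff_unique_mem.mpr
    ⟨h, fun b hb => Finset.card_le_one.mp (hfbcf p).2 b hb t h⟩

lemma count_eq_mixed (hself : N.NoSelfLoops) (hfbcf : N.FBCF) {ts : List N.T}
    (hseq : N.FireSeq N.M0 ts N.Md) {p : N.P} {t1 t2 : N.T}
    (h1 : t1 ∈ N.pIn p) (h2 : t2 ∈ N.pOut p) :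
    ts.count t1 = ts.count t2 := by
  have e1 := pIn_eq_singleton hfbcf h1
  have e2 := pOut_eq_singleton hfbcf h2
  have hb := balance hself hseq p
  simp only [M0, Md] at hb
  have c1 : ts.countP (fun u => decide (p ∈ N.out u)) = ts.count t1 :=
    countP_eq_count ts t1 _ (fun u => by rw [← mem_pIn, e1, Finset.mem_singleton])
  have c2 : ts.countP (fun u => decide (p ∈ N.inp u)) = ts.count t2 :=
    countP_eq_count ts t2 _ (fun u => by rw [← mem_pOut, e2, Finset.mem_singleton])
  rw [c1, c2, if_neg (by rw [e2]; exact Finset.singleton_ne_empty t2), if_neg (by rw [e1]; exact Finset.singleton_ne_empty t1)] at hb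
  omega

lemma count_eq_of_mem_union (hself : N.NoSelfLoops) (hfbcf : N.FBCF) {ts : List N.T}
    (hseq : N.FireSeq N.M0 ts N.Md) {p : N.P} {t1 t2 : N.T}
    (h1 : t1 ∈ N.pIn p ∪ N.pOut p) (h2 : t2 ∈ N.pIn p ∪ N.pOut p) :
    ts.count t1 = ts.count t2 := by
  rw [Finset.mem_union] at h1 h2
  rcases h1 with h1 | h1 <;> rcases h2 with h2 | h2
  · rw [Finset.card_le_one.mp (hfbcf p).1 t1 h1 t2 h2]
  · exact count_eq_mixed hself hfbcf hseq h1 h2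
  · exact (count_eq_mixed hself hfbcf hseq h2 h1).symm
  · rw [Finset.card_le_one.mp (hfbcf p).2 t1 h1 t2 h2]

/-- Whether a vertex of the directed graph of the net touches a transition. -/
def Touches (N : PetriNet) : (N.P ⊕ N.T) → N.T → Prop
  | .inl p, t => t ∈ N.pIn p ∪ N.pOut p
  | .inr t', t => t = t'

lemma count_eq_of_touches_same (hself : N.NoSelfLoops) (hfbcf : N.FBCF)
    {ts : List N.T} (hseq : N.FireSeq N.M0 ts N.Md) {v : N.P ⊕ N.T} {a b : N.T}
    (ha : N.Touches v a) (hb : N.Touches v b) : ts.count a = ts.count b := by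
  cases v with
  | inl p => exact count_eq_of_mem_union hself hfbcf hseq ha hb
  | inr t =>
    simp only [Touches] at ha hb
    rw [ha, hb]

lemma touches_of_arc {v w : N.P ⊕ N.T} (h : N.arc v w ∨ N.arc w v) :
    ∃ t, N.Touches v t ∧ N.Touches w t := by
  rcases v with p | t <;> rcases w with q | s
  · simp only [arc] at h; exact absurd h (by simp)
  · refine ⟨s, ?_, rfl⟩
    simp only [arc] at h
    simp only [Touches, Finset.mem_union, mem_pIn, mem_pOut]
    tauto
  · refine ⟨t, rfl, ?_⟩
    simp only [arc] at h
    simp only [Touches, Finset.mem_union, mem_pIn, mem_pOut]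
    tauto
  · simp only [arc] at h; exact absurd h (by simp)

lemma count_eq_of_path (hself : N.NoSelfLoops) (hfbcf : N.FBCF)
    {ts : List N.T} (hseq : N.FireSeq N.M0 ts N.Md) {v w : N.P ⊕ N.T}
    (h : Relation.ReflTransGen (fun a b => N.arc a b ∨ N.arc b a) v w) :
    ∀ {a b : N.T}, N.Touches v a → N.Touches w b → ts.count a = ts.count b := by
  induction h with
  | refl => exact fun ha hb => count_eq_of_touches_same hself hfbcf hseq ha hb
  | tail hpath hstep ih =>
    intro a b ha hb
    obtain ⟨t, ht1, ht2⟩ := touches_of_arc hstep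
    exact (ih ha ht1).trans (count_eq_of_touches_same hself hfbcf hseq ht2 hb)

/-- Let `N` be a weakly connected, forward-backward conflict free Petri
net (without self-loops) having at least one proper source place or at least one proper
sink place. Then every firing sequence transforming the source marking into the sink
marking fires every transition of `N` at least once. -/
theorem every_transition_fires (N : PetriNet)
    (hself : N.NoSelfLoops) (hfbcf : N.FBCF) (hconn : N.WeaklyConnected)
    (hproper : (∃ p, N.IsProperSource p) ∨ (∃ p, N.IsProperSink p))
    (ts : List N.T) (hseq : N.FireSeq N.M0 ts N.Md) :
    ∀ t : N.T, t ∈ ts := by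

  intro t
  obtain ⟨t0, h0⟩ : ∃ t0 : N.T, 1 ≤ ts.count t0 := by
    rcases hproper with ⟨p, hp⟩ | ⟨p, hp⟩
    · obtain ⟨hsrc, hne⟩ := hp
      have hsrc' : N.pIn p = ∅ := hsrc
      obtain ⟨t0, ht0⟩ := Finset.nonempty_iff_ne_empty.mpr hne
      refine ⟨t0, ?_⟩
      have hb := balance hself hseq p
      simp only [M0, Md] at hb
      have e2 := pOut_eq_singleton hfbcf ht0
      have c2 : ts.countP (fun u => decide (p ∈ N.inp u)) = ts.count t0 :=
        countP_eq_count ts t0 _ (fun u => by rw [← mem_pOut, e2, Finset.mem_singleton])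
      have c1 : ts.countP (fun u => decide (p ∈ N.out u)) = 0 :=
        List.countP_eq_zero.mpr fun u _ => by
          simp only [decide_eq_true_eq]
          rw [← mem_pIn, hsrc']
          exact Finset.notMem_empty u
      rw [c1, c2, if_pos hsrc', if_neg (by rw [e2]; exact Finset.singleton_ne_empty t0)] at hb
      omega
    · obtain ⟨hsnk, hne⟩ := hp
      have hsnk' : N.pOut p = ∅ := hsnk
      obtain ⟨t0, ht0⟩ := Finset.nonempty_iff_ne_empty.mpr hne
      refine ⟨t0, ?_⟩
      have hb := balance hself hseq p
      simp only [M0, Md] at hb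
      have e1 := pIn_eq_singleton hfbcf ht0
      have c1 : ts.countP (fun u => decide (p ∈ N.out u)) = ts.count t0 :=
        countP_eq_count ts t0 _ (fun u => by rw [← mem_pIn, e1, Finset.mem_singleton])
      have c2 : ts.countP (fun u => decide (p ∈ N.inp u)) = 0 :=
        List.countP_eq_zero.mpr fun u _ => by
          simp only [decide_eq_true_eq]
          rw [← mem_pOut, hsnk']
          exact Finset.notMem_empty u
      rw [c1, c2, if_pos hsnk', if_neg (by rw [e1]; exact Finset.singleton_ne_empty t0)] at hb
      omega
  have hpath := count_eq_of_path hself hfbcf hseq (hconn (Sum.inr t0) (Sum.inr t))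
    (a := t0) (b := t) rfl rfl
  by_contra hmem
  rw [List.count_eq_zero_of_not_mem hmem] at hpath
  omega
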